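/- Let t_0, t_1 ≥ 0 with t_0² + t_1² = 1, and a, b, c ∈ ℝ. Let T_1 = diag-pattern matrix with entries 2t_0t_1 at positions (1,1) and (3,3); T_2 with single entry t_0² − t_1² at (2,2); T_3 with entries 2t_0t_1 at positions (1,3) and (3,1). Then ‖aT_1 + bT_2 + cT_3‖_tr = |b||t_0² − t_1²| + 2(|a + c| + |a − c|)t_0t_1. -/

import Mathlib

open Matrix
open scoped ComplexOrder

/-- The positive semidefinite square root of a positive semidefinite matrix
(the definition `Matrix.PosSemidef.sqrt` of the older Mathlib, since removed). -/
noncomputable def Matrix.PosSemidef.sqrt {n : Type*} [Fintype n] [DecidableEq n]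
    {𝕜 : Type*} [RCLike 𝕜] {A : Matrix n n 𝕜} (hA : A.PosSemidef) : Matrix n n 𝕜 :=
  hA.1.eigenvectorUnitary.1 * diagonal ((↑) ∘ (Real.sqrt ·) ∘ hA.1.eigenvalues) *
    (star hA.1.eigenvectorUnitary : Matrix n n 𝕜)

/-- The trace norm `‖P‖_tr = tr √(P†P)` of a complex rectangular matrix
(the sum of its singular values). -/
noncomputable def traceNorm {m n : Type*} [Fintype m] [Fintype n] [DecidableEq n]
    (P : Matrix m n ℂ) : ℝ :=
  RCLike.re (Matrix.PosSemidef.sqrt (Matrix.posSemidef_conjTranspose_mul_self P)).trace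

/-!
All three matrices `T₁, T₂, T₃` are diagonal in the orthogonal basis `e₁ + e₃, e₁ − e₃, e₂`,
so `P = a T₁ + b T₂ + c T₃` is the real symmetric matrix with eigenvalues
`2(a + c)t₀t₁, 2(a − c)t₀t₁, b(t₀² − t₁²)` on these vectors. In that basis `√(PᴴP)` is the
diagonal matrix of the absolute values of the eigenvalues, and its trace is the claimed sum.
-/

open scoped MatrixOrder in
theorem Matrix.PosSemidef.sqrt_eq_cfcSqrt {n : Type*} [Fintype n] [DecidableEq n]
    {A : Matrix n n ℂ} (hA : A.PosSemidef) : hA.sqrt = CFC.sqrt A := by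
  rw [CFC.sqrt_eq_real_sqrt A hA.nonneg, cfcₙ_eq_cfc, hA.1.cfc_eq, Matrix.IsHermitian.cfc,
    Unitary.conjStarAlgAut_apply, Matrix.PosSemidef.sqrt]

open scoped MatrixOrder in
theorem Matrix.PosSemidef.sqrt_eq_of_sq_eq {n : Type*} [Fintype n] [DecidableEq n]
    {A B : Matrix n n ℂ} (hA : A.PosSemidef) (hB : B.PosSemidef) (h : B ^ 2 = A) :
    hA.sqrt = B := by
  rw [hA.sqrt_eq_cfcSqrt]
  exact CFC.sqrt_unique (by rw [← h, pow_two]) hB.nonneg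

theorem traceNorm_eq_re_trace_of_sq_eq {m n : Type*} [Fintype m] [Fintype n] [DecidableEq n]
    {P : Matrix m n ℂ} {B : Matrix n n ℂ} (hB : B.PosSemidef) (h : B ^ 2 = Pᴴ * P) :
    traceNorm P = RCLike.re B.trace := by
  rw [traceNorm, Matrix.PosSemidef.sqrt_eq_of_sq_eq _ hB h]

/-- The real symmetric matrix acting as `u` on `e₁ + e₃`, as `v` on `e₁ − e₃` and as `r` on `e₂`. -/
noncomputable def pmDiagonal (u v r : ℝ) : Matrix (Fin 3) (Fin 3) ℝ :=
  !![(u + v) / 2, 0, (u - v) / 2; 0, r, 0; (u - v) / 2, 0, (u + v) / 2]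

theorem pmDiagonal_mul (u v r u' v' r' : ℝ) :
    pmDiagonal u v r * pmDiagonal u' v' r' = pmDiagonal (u * u') (v * v') (r * r') := by
  ext i j
  fin_cases i <;> fin_cases j <;> simp [pmDiagonal, mul_apply, Fin.sum_univ_three] <;> ring

theorem pmDiagonal_transpose (u v r : ℝ) : (pmDiagonal u v r)ᵀ = pmDiagonal u v r := by
  ext i j
  fin_cases i <;> fin_cases j <;> rfl

theorem conjTranspose_map_ofReal {m n : Type*} (A : Matrix m n ℝ) :
    (A.map Complex.ofRealHom)ᴴ = Aᵀ.map Complex.ofRealHom := by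
  ext i j
  simp [Complex.conj_ofReal]

theorem conjTranspose_mul_self_pmDiagonal (u v r : ℝ) :
    ((pmDiagonal u v r).map Complex.ofRealHom)ᴴ * (pmDiagonal u v r).map Complex.ofRealHom =
      (pmDiagonal (u * u) (v * v) (r * r)).map Complex.ofRealHom := by
  rw [conjTranspose_map_ofReal, pmDiagonal_transpose, ← Matrix.map_mul, pmDiagonal_mul]

theorem posSemidef_pmDiagonal {u v r : ℝ} (hu : 0 ≤ u) (hv : 0 ≤ v) (hr : 0 ≤ r) :
    ((pmDiagonal u v r).map Complex.ofRealHom).PosSemidef := by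
  have hsq := conjTranspose_mul_self_pmDiagonal (√u) (√v) (√r)
  rw [Real.mul_self_sqrt hu, Real.mul_self_sqrt hv, Real.mul_self_sqrt hr] at hsq
  exact hsq ▸ posSemidef_conjTranspose_mul_self _

theorem traceNorm_pmDiagonal (u v r : ℝ) :
    traceNorm ((pmDiagonal u v r).map Complex.ofRealHom) = |u| + |v| + |r| := by
  have hsq : ((pmDiagonal |u| |v| |r|).map Complex.ofRealHom) ^ 2 =
      ((pmDiagonal u v r).map Complex.ofRealHom)ᴴ * (pmDiagonal u v r).map Complex.ofRealHom := by
    rw [conjTranspose_mul_self_pmDiagonal, pow_two, ← Matrix.map_mul, pmDiagonal_mul,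
      abs_mul_abs_self, abs_mul_abs_self, abs_mul_abs_self]
  rw [traceNorm_eq_re_trace_of_sq_eq
    (posSemidef_pmDiagonal (abs_nonneg u) (abs_nonneg v) (abs_nonneg r)) hsq,
    ← AddMonoidHom.map_trace Complex.ofRealHom, Complex.ofRealHom_eq_coe, RCLike.re_to_complex,
    Complex.ofReal_re, pmDiagonal, trace_fin_three_of]
  ring

theorem traceNorm_case_ii_general (t0 t1 a b c : ℝ) (ht0 : 0 ≤ t0) (ht1 : 0 ≤ t1) :
    traceNorm ((a • !![2 * t0 * t1, 0, 0; 0, 0, 0; 0, 0, 2 * t0 * t1]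
        + b • !![0, 0, 0; 0, t0 ^ 2 - t1 ^ 2, 0; 0, 0, 0]
        + c • !![0, 0, 2 * t0 * t1; 0, 0, 0; 2 * t0 * t1, 0, 0] : Matrix (Fin 3) (Fin 3) ℝ).map
          (fun x => (x : ℂ))) =
      |b| * |t0 ^ 2 - t1 ^ 2| + 2 * (|a + c| + |a - c|) * t0 * t1 := by
  have hP : (a • !![2 * t0 * t1, 0, 0; 0, 0, 0; 0, 0, 2 * t0 * t1]
        + b • !![0, 0, 0; 0, t0 ^ 2 - t1 ^ 2, 0; 0, 0, 0]
        + c • !![0, 0, 2 * t0 * t1; 0, 0, 0; 2 * t0 * t1, 0, 0] : Matrix (Fin 3) (Fin 3) ℝ) =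
      pmDiagonal ((a + c) * (2 * t0 * t1)) ((a - c) * (2 * t0 * t1)) (b * (t0 ^ 2 - t1 ^ 2)) := by
    ext i j
    fin_cases i <;> fin_cases j <;> simp [pmDiagonal] <;> ring
  have ht : 0 ≤ 2 * t0 * t1 := by positivity
  rw [hP, show (fun x : ℝ => (x : ℂ)) = Complex.ofRealHom from rfl, traceNorm_pmDiagonal,
    abs_mul (a + c), abs_mul (a - c), abs_mul b, abs_of_nonneg ht]
  ring

/-- Trace norm of `a T₁ + b T₂ + c T₃` where `T₁` has entries `2t₀t₁` at `(1,1)`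
and `(3,3)`, `T₂` has the single entry `t₀² − t₁²` at `(2,2)`, and `T₃` has
entries `2t₀t₁` at `(1,3)` and `(3,1)`:
`‖·‖_tr = |b||t₀² − t₁²| + 2(|a + c| + |a − c|) t₀ t₁`. -/
theorem traceNorm_case_ii (t0 t1 a b c : ℝ) (ht0 : 0 ≤ t0) (ht1 : 0 ≤ t1)
    (h : t0 ^ 2 + t1 ^ 2 = 1) :
    traceNorm ((a • !![2 * t0 * t1, 0, 0; 0, 0, 0; 0, 0, 2 * t0 * t1]
        + b • !![0, 0, 0; 0, t0 ^ 2 - t1 ^ 2, 0; 0, 0, 0]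
        + c • !![0, 0, 2 * t0 * t1; 0, 0, 0; 2 * t0 * t1, 0, 0] : Matrix (Fin 3) (Fin 3) ℝ).map
          (fun x => (x : ℂ))) =
      |b| * |t0 ^ 2 - t1 ^ 2| + 2 * (|a + c| + |a - c|) * t0 * t1 :=
  traceNorm_case_ii_general t0 t1 a b c ht0 ht1
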